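/- For a full-rank lattice L ⊂ ℝ^n with basis b₁,…,bₙ and Gram–Schmidt norms ‖b_i*‖, and for a vector v = Σ x_i b_i with x_i ∈ ℤ and target t = Σ t_i b_i, the squared distance decomposes as ‖v − t‖² = Σ_{k=1}^n (x_k − c_k)²·‖b_k*‖², where c_k = t_k + Σ_{i>k} (t_i − x_i)·μ_{ik} and μ_{ik} = ⟨b_i, b_k*⟩/‖b_k*‖². -/

import Mathlib

/-!
Each `bᵢ` is `bᵢ* + Σ_{k<i} μᵢₖ bₖ*`, so expanding `v − t = Σᵢ (xᵢ − tᵢ) bᵢ` and exchanging the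
two sums writes `v − t` in the orthogonal family `bₖ*` with coefficient `xₖ − cₖ` on `bₖ*`;
Pythagoras then gives the decomposition. Where `bₖ* = 0`, division by `‖bₖ*‖² = 0` makes `μᵢₖ`
the junk value `0`, and the `k`-th term vanishes on both sides.
-/

/-- Mathlib's Gram–Schmidt orthogonalization, specialized to vectors in `ℝ^n`
indexed by `Fin n` (the specialization helps typeclass inference). -/
noncomputable def gramSchmidtFin {n : ℕ} (b : Fin n → EuclideanSpace ℝ (Fin n)) :
    Fin n → EuclideanSpace ℝ (Fin n) :=
  @InnerProductSpace.gramSchmidt ℝ (EuclideanSpace ℝ (Fin n)) _ _ _ (Fin n) _ _ IsWellOrder.toIsWellFounded b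

open Finset InnerProductSpace

section

variable {ι E : Type*} [NormedAddCommGroup E] [InnerProductSpace ℝ E]

theorem norm_sum_smul_sq_of_pairwise_inner_eq_zero [Fintype ι] {v : ι → E}
    (hv : Pairwise fun i j => inner ℝ (v i) (v j) = 0) (a : ι → ℝ) :
    ‖∑ i, a i • v i‖ ^ 2 = ∑ i, a i ^ 2 * ‖v i‖ ^ 2 := by
  rw [← real_inner_self_eq_norm_sq, sum_inner]
  refine sum_congr rfl fun i _ => ?_
  have hoff : ∀ j ≠ i, inner ℝ (a i • v i) (a j • v j) = 0 := fun j hji => by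
    rw [real_inner_smul_left, real_inner_smul_right, hv hji.symm, mul_zero, mul_zero]
  rw [inner_sum, sum_eq_single i (fun j _ => hoff j) (by simp), real_inner_smul_left,
    real_inner_smul_right, real_inner_self_eq_norm_sq]
  ring

variable [LinearOrder ι] [Fintype ι] [LocallyFiniteOrderBot ι] [WellFoundedLT ι]

theorem sum_smul_eq_sum_smul_gramSchmidt (b : ι → E) (y : ι → ℝ) :
    ∑ i, y i • b i = ∑ k, (y k + ∑ i with k < i,
      y i * (inner ℝ (b i) (gramSchmidt ℝ b k) / ‖gramSchmidt ℝ b k‖ ^ 2)) • gramSchmidt ℝ b k := by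
  have hcomm : ∀ f : ι → ι → E, ∑ i, ∑ k ∈ Iio i, f i k = ∑ k, ∑ i with k < i, f i k :=
    fun f => sum_comm' (by simp)
  conv_lhs => enter [2, i]; rw [gramSchmidt_def'' ℝ b i]
  simp only [smul_add, smul_sum, sum_add_distrib, hcomm, add_smul, sum_smul, smul_smul,
    real_inner_comm (b _), RCLike.ofReal_real_eq_id, id]

theorem norm_sum_smul_sq_eq_sum_gramSchmidt (b : ι → E) (y : ι → ℝ) :
    ‖∑ i, y i • b i‖ ^ 2 = ∑ k, (y k + ∑ i with k < i,
      y i * (inner ℝ (b i) (gramSchmidt ℝ b k) / ‖gramSchmidt ℝ b k‖ ^ 2)) ^ 2 *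
        ‖gramSchmidt ℝ b k‖ ^ 2 := by
  rw [sum_smul_eq_sum_smul_gramSchmidt,
    norm_sum_smul_sq_of_pairwise_inner_eq_zero (gramSchmidt_pairwise_orthogonal ℝ b)]

end

theorem gramSchmidtFin_eq_gramSchmidt {n : ℕ} (b : Fin n → EuclideanSpace ℝ (Fin n)) :
    gramSchmidtFin b = gramSchmidt ℝ b :=
  rfl

theorem enum_decomposition_general {n : ℕ} (b : Fin n → EuclideanSpace ℝ (Fin n))
    (x : Fin n → ℤ) (t : Fin n → ℝ) :
    ‖(∑ i, (x i : ℝ) • b i) - ∑ i, t i • b i‖ ^ 2 =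
      ∑ k, ((x k : ℝ) - (t k + ∑ i ∈ Finset.univ.filter (fun i => k < i),
          (t i - (x i : ℝ)) *
            ((inner ℝ (b i) (gramSchmidtFin b k) : ℝ) / ‖gramSchmidtFin b k‖ ^ 2))) ^ 2 *
        ‖gramSchmidtFin b k‖ ^ 2 := by
  rw [← sum_sub_distrib, gramSchmidtFin_eq_gramSchmidt]
  simp only [← sub_smul, norm_sum_smul_sq_eq_sum_gramSchmidt, ← neg_sub (x _ : ℝ), neg_mul,
    sum_neg_distrib]
  exact sum_congr rfl fun k _ => by ring

/-- The orthogonal decomposition underlying Schnorr–Euchner enumeration: for a basis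
`b₁, …, bₙ`, `v = Σ xᵢ bᵢ` with `xᵢ ∈ ℤ` and target `t = Σ tᵢ bᵢ`,
`‖v − t‖² = Σₖ (xₖ − cₖ)²·‖bₖ*‖²` where `cₖ = tₖ + Σ_{i>k} (tᵢ − xᵢ)·μᵢₖ` and
`μᵢₖ = ⟨bᵢ, bₖ*⟩/‖bₖ*‖²`. -/
theorem enum_decomposition {n : ℕ} (b : Fin n → EuclideanSpace ℝ (Fin n))
    (hb : LinearIndependent ℝ b) (x : Fin n → ℤ) (t : Fin n → ℝ) :
    ‖(∑ i, (x i : ℝ) • b i) - ∑ i, t i • b i‖ ^ 2 =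
      ∑ k, ((x k : ℝ) - (t k + ∑ i ∈ Finset.univ.filter (fun i => k < i),
          (t i - (x i : ℝ)) *
            ((inner ℝ (b i) (gramSchmidtFin b k) : ℝ) / ‖gramSchmidtFin b k‖ ^ 2))) ^ 2 *
        ‖gramSchmidtFin b k‖ ^ 2 :=
  enum_decomposition_general b x t
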